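/- For a finite MDP M and target set T, the maximal reachability probability function s ↦ Pr^max_{M,s}(reach T) is the least fixed point (over [0,1]^S, pointwise order) of the Bellman operator F(x)(s) = 1 if s ∈ T and max_{a ∈ A(s)} Σ_{s'} P(s,a)(s')·x(s') otherwise; in particular it satisfies the Bellman optimality equations. -/

import Mathlib

open Classical

open Classical in
/-- `n`-step reachability probability of the target `T` under the (deterministic,
history-dependent) strategy `σ`, starting from state `s` with history `h`. -/
noncomputable def reachN {S A : Type*} [Fintype S]
    (P : S → A → S → ℝ) (T : Set S) (σ : List S → S → A) :
    ℕ → List S → S → ℝ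
  | 0, _, s => if s ∈ T then 1 else 0
  | n + 1, h, s =>
      if s ∈ T then 1 else ∑ s', P s (σ h s) s' * reachN P T σ n (h ++ [s]) s'

open Classical in
/-- The maximal reachability probability `Pr^max_{M,s}(reach T)`, as the supremum
over all (valid) strategies of the limit of the `n`-step reachability values. -/
noncomputable def maxReach {S A : Type*} [Fintype S]
    (P : S → A → S → ℝ) (enab : S → Finset A) (T : Set S) (s : S) : ℝ :=
  ⨆ σ : { σ : List S → S → A // ∀ h s', σ h s' ∈ enab s' },
    ⨆ n : ℕ, reachN P T σ.1 n [] s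

open Classical in
/-- The Bellman operator `F` for maximal reachability. -/
noncomputable def bellman {S A : Type*} [Fintype S]
    (P : S → A → S → ℝ) (enab : S → Finset A) (henab : ∀ s, (enab s).Nonempty)
    (T : Set S) (x : S → ℝ) : S → ℝ :=
  fun s =>
    if s ∈ T then 1
    else (enab s).sup' (henab s) (fun a => ∑ s', P s a s' * x s')

/-!
Both inequalities between `Pr^max` and `F(Pr^max)` come from splitting off the first step. After
one step from `s`, the rest of a scheduler is a (shifted) scheduler started at the successor `s'`,
so `Pr^max ≤ F(Pr^max)`. Conversely, for an enabled action `a` at `s` and `ε > 0`, play `a` first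
and then, at the successor `s'`, switch to a scheduler that is `ε`-optimal at `s'` (`S` is finite,
so one horizon serves all `s'`); this gives `∑ P(s,a)(s') Pr^max(s') ≤ Pr^max(s) + ε`. Minimality:
induction on the horizon bounds every `n`-step value by any nonnegative prefixed point of `F`.
-/

abbrev Scheduler {S A : Type*} (enab : S → Finset A) :=
  { σ : List S → S → A // ∀ h s, σ h s ∈ enab s }

theorem Scheduler.nonempty {S A : Type*} {enab : S → Finset A}
    (henab : ∀ s, (enab s).Nonempty) : Nonempty (Scheduler enab) :=
  ⟨⟨fun _ s => (henab s).choose, fun _ s => (henab s).choose_spec⟩⟩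

section
variable {S A : Type*} [Fintype S] {P : S → A → S → ℝ} {T : Set S} {enab : S → Finset A}

def Scheduler.shift (σ : Scheduler enab) (h₀ : List S) : Scheduler enab :=
  ⟨fun h s => σ.1 (h₀ ++ h) s, fun _ _ => σ.2 _ _⟩

/-- Play `a` at `s`, then follow `τ s'` as if started afresh at the successor `s'`, which is the
head of every later history once the initial state is dropped. -/
noncomputable def Scheduler.actThen (s : S) (a : A) (ha : a ∈ enab s) (τ : S → Scheduler enab) :
    Scheduler enab :=
  ⟨fun h t => match h with
    | [] => if t = s then a else (τ t).1 [] t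
    | _ :: h' => (τ (h'.headD t)).1 h' t,
   fun h t => by
    rcases h with _ | ⟨_, h'⟩
    · dsimp only
      split_ifs with ht
      · exact ht ▸ ha
      · exact (τ t).2 [] t
    · exact (τ _).2 h' t⟩

theorem reachN_of_mem {σ : List S → S → A} {s : S} (hs : s ∈ T) (n : ℕ) (h : List S) :
    reachN P T σ n h s = 1 := by
  cases n <;> simp [reachN, hs]

/-- The `n`-step value at history `h₁` only depends on the choices along continuations of `h₁`. -/
theorem reachN_congr {σ σ' : List S → S → A} (n : ℕ) (h₁ h₂ : List S) (s : S)
    (hs : σ h₁ s = σ' h₂ s) (hcont : ∀ h t, σ (h₁ ++ s :: h) t = σ' (h₂ ++ s :: h) t) :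
    reachN P T σ n h₁ s = reachN P T σ' n h₂ s := by
  induction n generalizing h₁ h₂ s with
  | zero => rfl
  | succ n ih =>
    simp only [reachN, hs]
    congr 1
    refine Finset.sum_congr rfl fun s' _ => congrArg _ (ih _ _ s' ?_ fun h t => ?_)
    · simpa using hcont [] s'
    · simpa using hcont (s' :: h) t

theorem reachN_shift (σ : Scheduler enab) (n : ℕ) (h : List S) (s : S) :
    reachN P T σ n h s = reachN P T (σ.shift h) n [] s :=
  reachN_congr n h [] s (by simp [Scheduler.shift]) fun _ _ => by simp [Scheduler.shift]

theorem reachN_actThen {s : S} (hs : s ∉ T) {a : A} (ha : a ∈ enab s)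
    (τ : S → Scheduler enab) (n : ℕ) :
    reachN P T (Scheduler.actThen s a ha τ) (n + 1) [] s =
      ∑ s', P s a s' * reachN P T (τ s') n [] s' := by
  have hact : (Scheduler.actThen s a ha τ).1 [] s = a := by simp [Scheduler.actThen]
  simp only [reachN, hs, if_false, List.nil_append, hact]
  refine Finset.sum_congr rfl fun s' _ => congrArg _ ?_
  exact reachN_congr n [s] [] s' (by simp [Scheduler.actThen])
    fun _ _ => by simp [Scheduler.actThen]

theorem maxReach_of_mem (henab : ∀ s, (enab s).Nonempty) {s : S} (hs : s ∈ T) :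
    maxReach P enab T s = 1 := by
  have := Scheduler.nonempty henab
  simp [maxReach, reachN_of_mem hs]

variable (hP0 : ∀ s, ∀ a ∈ enab s, ∀ s', 0 ≤ P s a s')
include hP0

theorem reachN_nonneg (σ : Scheduler enab) (n : ℕ) (h : List S) (s : S) :
    0 ≤ reachN P T σ n h s := by
  induction n generalizing h s with
  | zero => unfold reachN; positivity
  | succ n ih =>
    unfold reachN
    split_ifs
    · exact zero_le_one
    · exact Finset.sum_nonneg fun s' _ => mul_nonneg (hP0 _ _ (σ.2 h s) s') (ih _ s')

theorem reachN_le_succ (σ : Scheduler enab) (n : ℕ) (h : List S) (s : S) :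
    reachN P T σ n h s ≤ reachN P T σ (n + 1) h s := by
  induction n generalizing h s with
  | zero =>
    rw [reachN, reachN]
    split_ifs
    · exact le_rfl
    · exact Finset.sum_nonneg fun s' _ =>
        mul_nonneg (hP0 _ _ (σ.2 h s) s') (reachN_nonneg hP0 σ 0 _ s')
  | succ n ih =>
    rw [reachN, reachN]
    split_ifs
    · exact le_rfl
    · exact Finset.sum_le_sum fun s' _ =>
        mul_le_mul_of_nonneg_left (ih _ s') (hP0 _ _ (σ.2 h s) s')

theorem reachN_monotone (σ : Scheduler enab) (h : List S) (s : S) :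
    Monotone fun n => reachN P T σ n h s :=
  monotone_nat_of_le_succ fun n => reachN_le_succ hP0 σ n h s

theorem maxReach_nonneg (s : S) : 0 ≤ maxReach P enab T s :=
  Real.iSup_nonneg fun σ => Real.iSup_nonneg fun n => reachN_nonneg hP0 σ n [] s

theorem bellman_nonneg (henab : ∀ s, (enab s).Nonempty) {x : S → ℝ} (hx : 0 ≤ x) (s : S) :
    0 ≤ bellman P enab henab T x s := by
  unfold bellman
  split_ifs
  · exact zero_le_one
  · obtain ⟨a, ha⟩ := henab s
    exact (Finset.sum_nonneg fun s' _ => mul_nonneg (hP0 s a ha s') (hx s')).trans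
      (Finset.le_sup' (fun a => ∑ s', P s a s' * x s') ha)

theorem reachN_succ_le_bellman (henab : ∀ s, (enab s).Nonempty) (σ : Scheduler enab)
    {x : S → ℝ} {n : ℕ} {h : List S} {s : S}
    (hx : ∀ s', reachN P T σ n (h ++ [s]) s' ≤ x s') :
    reachN P T σ (n + 1) h s ≤ bellman P enab henab T x s := by
  unfold reachN bellman
  split_ifs
  · exact le_rfl
  · calc ∑ s', P s (σ.1 h s) s' * reachN P T σ n (h ++ [s]) s'
        ≤ ∑ s', P s (σ.1 h s) s' * x s' :=
          Finset.sum_le_sum fun s' _ => mul_le_mul_of_nonneg_left (hx s') (hP0 _ _ (σ.2 h s) s')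
      _ ≤ _ := Finset.le_sup' (fun a => ∑ s', P s a s' * x s') (σ.2 h s)

theorem reachN_le_of_bellman_le (henab : ∀ s, (enab s).Nonempty) {w : S → ℝ} (hw : 0 ≤ w)
    (hpre : bellman P enab henab T w ≤ w) (σ : Scheduler enab) (n : ℕ) (h : List S) (s : S) :
    reachN P T σ n h s ≤ w s := by
  induction n generalizing h s with
  | zero =>
    by_cases hs : s ∈ T
    · simpa [reachN_of_mem hs, bellman, hs] using hpre s
    · simpa [reachN, hs] using hw s
  | succ n ih => exact (reachN_succ_le_bellman hP0 henab σ fun s' => ih _ s').trans (hpre s)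

theorem maxReach_le_of_bellman_le (henab : ∀ s, (enab s).Nonempty) {w : S → ℝ} (hw : 0 ≤ w)
    (hpre : bellman P enab henab T w ≤ w) (s : S) : maxReach P enab T s ≤ w s :=
  Real.iSup_le (fun σ => Real.iSup_le (fun n => reachN_le_of_bellman_le hP0 henab hw hpre σ n [] s)
    (hw s)) (hw s)

theorem exists_scheduler_reachN_gt (henab : ∀ s, (enab s).Nonempty) {ε : ℝ} (hε : 0 < ε) :
    ∃ (N : ℕ) (τ : S → Scheduler enab), ∀ s, maxReach P enab T s - ε < reachN P T (τ s) N [] s := by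
  have := Scheduler.nonempty henab
  have hopt : ∀ s, ∃ (τ : Scheduler enab) (n : ℕ),
      maxReach P enab T s - ε < reachN P T τ n [] s := by
    intro s
    obtain ⟨τ, hτ⟩ := exists_lt_of_lt_ciSup (sub_lt_self (maxReach P enab T s) hε)
    exact ⟨τ, exists_lt_of_lt_ciSup hτ⟩
  choose τ n hτ using hopt
  exact ⟨Finset.univ.sup n, τ, fun s => (hτ s).trans_le
    (reachN_monotone hP0 (τ s) [] s (Finset.le_sup (Finset.mem_univ s)))⟩

variable (hP1 : ∀ s, ∀ a ∈ enab s, ∑ s', P s a s' = 1)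
include hP1

theorem reachN_le_one (σ : Scheduler enab) (n : ℕ) (h : List S) (s : S) :
    reachN P T σ n h s ≤ 1 := by
  induction n generalizing h s with
  | zero => unfold reachN; split_ifs <;> norm_num
  | succ n ih =>
    unfold reachN
    split_ifs
    · exact le_rfl
    · calc ∑ s', P s (σ.1 h s) s' * reachN P T σ n (h ++ [s]) s'
          ≤ ∑ s', P s (σ.1 h s) s' :=
            Finset.sum_le_sum fun s' _ =>
              mul_le_of_le_one_right (hP0 _ _ (σ.2 h s) s') (ih _ s')
        _ = 1 := hP1 _ _ (σ.2 h s)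

theorem bddAbove_range_reachN (σ : Scheduler enab) (s : S) :
    BddAbove (Set.range fun n => reachN P T σ n [] s) :=
  ⟨1, Set.forall_mem_range.2 fun n => reachN_le_one hP0 hP1 σ n [] s⟩

theorem bddAbove_range_iSup_reachN (s : S) :
    BddAbove (Set.range fun σ : Scheduler enab => ⨆ n, reachN P T σ n [] s) :=
  ⟨1, Set.forall_mem_range.2 fun σ =>
    Real.iSup_le (fun n => reachN_le_one hP0 hP1 σ n [] s) zero_le_one⟩

theorem reachN_le_maxReach (σ : Scheduler enab) (n : ℕ) (h : List S) (s : S) :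
    reachN P T σ n h s ≤ maxReach P enab T s := by
  rw [reachN_shift]
  exact (le_ciSup (bddAbove_range_reachN hP0 hP1 _ s) n).trans
    (le_ciSup (bddAbove_range_iSup_reachN hP0 hP1 s) (σ.shift h))

theorem maxReach_le_bellman_maxReach (henab : ∀ s, (enab s).Nonempty) (s : S) :
    maxReach P enab T s ≤ bellman P enab henab T (maxReach P enab T) s := by
  have hF := bellman_nonneg hP0 henab (T := T) (maxReach_nonneg hP0 (T := T)) s
  refine Real.iSup_le (fun σ => Real.iSup_le (fun n => ?_) hF) hF
  exact (reachN_le_succ hP0 σ n [] s).trans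
    (reachN_succ_le_bellman hP0 henab σ fun s' => reachN_le_maxReach hP0 hP1 σ n _ s')

theorem sum_mul_maxReach_le (henab : ∀ s, (enab s).Nonempty) {s : S} (hs : s ∉ T) {a : A}
    (ha : a ∈ enab s) : ∑ s', P s a s' * maxReach P enab T s' ≤ maxReach P enab T s := by
  refine le_of_forall_pos_le_add fun ε hε => ?_
  obtain ⟨N, τ, hτ⟩ := exists_scheduler_reachN_gt hP0 henab (T := T) hε
  calc ∑ s', P s a s' * maxReach P enab T s'
      ≤ ∑ s', P s a s' * (reachN P T (τ s') N [] s' + ε) :=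
        Finset.sum_le_sum fun s' _ =>
          mul_le_mul_of_nonneg_left (by linarith [hτ s']) (hP0 s a ha s')
    _ = reachN P T (Scheduler.actThen s a ha τ) (N + 1) [] s + ε := by
        simp only [reachN_actThen hs, mul_add, Finset.sum_add_distrib, ← Finset.sum_mul,
          hP1 s a ha, one_mul]
    _ ≤ maxReach P enab T s + ε := by
        gcongr
        exact reachN_le_maxReach hP0 hP1 _ _ _ _

theorem bellman_maxReach_le (henab : ∀ s, (enab s).Nonempty) (s : S) :
    bellman P enab henab T (maxReach P enab T) s ≤ maxReach P enab T s := by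
  unfold bellman
  split_ifs with hs
  · exact (maxReach_of_mem henab hs).ge
  · exact Finset.sup'_le _ _ fun a ha => sum_mul_maxReach_le hP0 hP1 henab hs ha

end

theorem maxReach_lfp_bellman_general {S A : Type*} [Fintype S]
    (P : S → A → S → ℝ) (enab : S → Finset A) (henab : ∀ s, (enab s).Nonempty)
    (T : Set S)
    (hP0 : ∀ s, ∀ a ∈ enab s, ∀ s', 0 ≤ P s a s')
    (hP1 : ∀ s, ∀ a ∈ enab s, ∑ s', P s a s' = 1) :
    bellman P enab henab T (maxReach P enab T) = maxReach P enab T ∧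
      ∀ w : S → ℝ, (∀ s, 0 ≤ w s ∧ w s ≤ 1) →
        bellman P enab henab T w = w → ∀ s, maxReach P enab T s ≤ w s :=
  ⟨funext fun s => (bellman_maxReach_le hP0 hP1 henab s).antisymm
      (maxReach_le_bellman_maxReach hP0 hP1 henab s),
    fun _ hw hfix => maxReach_le_of_bellman_le hP0 henab (fun s => (hw s).1) hfix.le⟩

/-- for a finite MDP, the maximal reachability probability function is
the least fixed point of the Bellman operator on `[0,1]^S`; in particular it
satisfies the Bellman optimality equations. -/
theorem maxReach_lfp_bellman {S A : Type*} [Fintype S] [Fintype A]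
    (P : S → A → S → ℝ) (enab : S → Finset A) (henab : ∀ s, (enab s).Nonempty)
    (T : Set S)
    (hP0 : ∀ s, ∀ a ∈ enab s, ∀ s', 0 ≤ P s a s')
    (hP1 : ∀ s, ∀ a ∈ enab s, ∑ s', P s a s' = 1) :
    bellman P enab henab T (maxReach P enab T) = maxReach P enab T ∧
      ∀ w : S → ℝ, (∀ s, 0 ≤ w s ∧ w s ≤ 1) →
        bellman P enab henab T w = w → ∀ s, maxReach P enab T s ≤ w s :=
  maxReach_lfp_bellman_general P enab henab T hP0 hP1
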